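/- arXiv:2108.01209 — 2 statements merged into one kernel-verified Lean document; each statement's English description precedes it below -/
import Mathlib

section
/- Let q ≡ 3 (mod 8) be an odd prime power with q ≥ 11 and q ≡ 1 (mod 3) (equivalently, 3 ∈ NQR(q)). If β ∈ NQR(q)\{−1} satisfies β² − β + 1 = 0, then the one-factorization of the complete graph on F_q ∪ {∞} generated by the starter S_β is (1, C_4): the union of any two distinct one-factors of this one-factorization contains exactly one cycle of length four. -/
open SimpleGraph

namespace Paper

variable {V : Type*} {Γ : Type*} {F : Type*}

/-- A one-factor on vertex set `V`: a perfect matching, i.e. every vertex has a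
unique neighbour. -/
def IsOneFactor (G : SimpleGraph V) : Prop :=
  ∀ v : V, ∃! w : V, G.Adj v w

/-- A one-factorization of the complete graph on `V`: a set of one-factors that are
pairwise edge-disjoint and whose edges cover all edges of the complete graph. -/
def IsOneFactorization (𝓕 : Set (SimpleGraph V)) : Prop :=
  (∀ G ∈ 𝓕, IsOneFactor G) ∧
  (∀ G ∈ 𝓕, ∀ H ∈ 𝓕, G ≠ H → Disjoint G.edgeSet H.edgeSet) ∧
  (∀ u v : V, u ≠ v → ∃ G ∈ 𝓕, G.Adj u v)

/-- Two one-factorizations of the complete graph are orthogonal if any two of their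
members share at most one edge. -/
def AreOrthogonalFactorizations (𝓕 𝓖 : Set (SimpleGraph V)) : Prop :=
  IsOneFactorization 𝓕 ∧ IsOneFactorization 𝓖 ∧
    ∀ G ∈ 𝓕, ∀ H ∈ 𝓖, (G.edgeSet ∩ H.edgeSet).Subsingleton

/-- `s` is the vertex set of a cycle of length four in `H`. -/
def IsFourCycleOn (H : SimpleGraph V) (s : Set V) : Prop :=
  ∃ a b c d : V, a ≠ b ∧ a ≠ c ∧ a ≠ d ∧ b ≠ c ∧ b ≠ d ∧ c ≠ d ∧
    s = {a, b, c, d} ∧ H.Adj a b ∧ H.Adj b c ∧ H.Adj c d ∧ H.Adj d a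

/-- The number of (vertex sets of) cycles of length four contained in `H`. -/
noncomputable def fourCycleCount (H : SimpleGraph V) : ℕ :=
  Set.ncard {s : Set V | IsFourCycleOn H s}

/-- The set of nonzero squares (quadratic residues) of a field. -/
def QRset (F : Type*) [Field F] : Set F := {x | x ≠ 0 ∧ IsSquare x}

/-- The set of non-squares (quadratic non-residues) of a field. -/
def NQRset (F : Type*) [Field F] : Set F := {x | ¬ IsSquare x}

/-- Horton's starter `S_β = {{x, xβ} : x ∈ QR(q)}`, as a set of unordered pairs. -/
def hortonStarter [Field F] (β : F) : Set (Sym2 F) :=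
  {e | ∃ x : F, x ≠ 0 ∧ IsSquare x ∧ e = s(x, x * β)}

/-- `-S_β = {{y, yβ} : y ∈ NQR(q)}`, as a set of unordered pairs. -/
def hortonNegStarter [Field F] (β : F) : Set (Sym2 F) :=
  {e | ∃ y : F, ¬ IsSquare y ∧ e = s(y, y * β)}

/-- The one-factor `F_γ = {{∞, γ}} ∪ {{x + γ, y + γ} : {x, y} ∈ S}` of the complete
graph on `Γ ∪ {∞}` (with `∞ = none`) obtained by translating the starter `S` by `γ`. -/
def starterFactor [AddCommGroup Γ] (S : Set (Sym2 Γ)) (γ : Γ) : SimpleGraph (Option Γ) :=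
  SimpleGraph.fromEdgeSet
    ({s((none : Option Γ), some γ)} ∪ (Sym2.map (fun x => some (x + γ)) '' S))

/-- A starter for an additive abelian group: every nonzero element of the group
appears in exactly one pair, all elements appearing in pairs are nonzero, and every
nonzero difference arises from exactly one ordered pair. -/
def IsStarter [AddCommGroup Γ] (S : Set (Sym2 Γ)) : Prop :=
  (∀ z : Γ, z ≠ 0 → ∃! e : Sym2 Γ, e ∈ S ∧ z ∈ e) ∧
  (∀ e ∈ S, ∀ z ∈ e, z ≠ (0 : Γ)) ∧
  (∀ d : Γ, d ≠ 0 → ∃! p : Γ × Γ, s(p.1, p.2) ∈ S ∧ p.1 - p.2 = d)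

/-- A strong starter: a starter whose pair sums are nonzero and pairwise distinct. -/
def IsStrongStarter [AddCommGroup Γ] (S : Set (Sym2 Γ)) : Prop :=
  IsStarter S ∧
  (∀ x y : Γ, s(x, y) ∈ S → x + y ≠ 0) ∧
  (∀ x y u v : Γ, s(x, y) ∈ S → s(u, v) ∈ S → x + y = u + v → s(x, y) = s(u, v))

/-- Two starters are orthogonal if, writing `(x_d, y_d) ∈ S` and `(u_d, v_d) ∈ T`
for the ordered pairs with difference `d ≠ 0`, one has `u_d ≠ x_d` for all `d`, and
`u_d - x_d = u_e - x_e` implies `d = e`. -/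
def AreOrthogonalStarters [AddCommGroup Γ] (S T : Set (Sym2 Γ)) : Prop :=
  (∀ d x y u v : Γ, d ≠ 0 → s(x, y) ∈ S → s(u, v) ∈ T → x - y = d → u - v = d → u ≠ x) ∧
  (∀ d e x y u v x' y' u' v' : Γ, d ≠ 0 → e ≠ 0 →
    s(x, y) ∈ S → s(u, v) ∈ T → x - y = d → u - v = d →
    s(x', y') ∈ S → s(u', v') ∈ T → x' - y' = e → u' - v' = e →
    u - x = u' - x' → d = e)

/-!
The pairs of `S_β` are `{x, βx}` with `x` a nonzero square, and `β` is a primitive sixth root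
of unity, so `β - 1 = β²` and `-β = β⁴` are squares. Each translate `F_γ` is a matching, hence
every four-cycle of `F_γ ∪ F_δ` alternates between the two factors and is determined by any
one of its vertices. Through `∞` there is exactly one: `∞, γ, z, δ`, where `z` is the common
neighbour of `γ` in `F_δ` and of `δ` in `F_γ`. A four-cycle avoiding `∞` is impossible: in each
orientation pattern of its four edges, the edge equations force `γ = δ`, `2γ = 2δ`, or a ratio of
two nonzero squares equal to one of `-1`, `2`, `2β²`, `-2β`, which are non-squares since
`q ≡ 3 (mod 8)`.
-/

section FourCycles

variable {G₁ G₂ H : SimpleGraph V} {s t : Set V} {u v w : V}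

lemma IsFourCycleOn.exists_of_mem (hs : IsFourCycleOn H s) (hv : v ∈ s) :
    ∃ b c d, v ≠ c ∧ b ≠ d ∧ s = {v, b, c, d} ∧
      H.Adj v b ∧ H.Adj b c ∧ H.Adj c d ∧ H.Adj d v := by
  obtain ⟨a, b, c, d, -, hac, -, -, hbd, -, rfl, hab, hbc, hcd, hda⟩ := hs
  simp only [Set.mem_insert_iff, Set.mem_singleton_iff] at hv
  rcases hv with rfl | rfl | rfl | rfl
  · exact ⟨b, c, d, hac, hbd, rfl, hab, hbc, hcd, hda⟩
  · refine ⟨c, d, a, hbd, hac.symm, ?_, hbc, hcd, hda, hab⟩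
    ext; simp only [Set.mem_insert_iff, Set.mem_singleton_iff]; tauto
  · refine ⟨d, a, b, hac.symm, hbd.symm, ?_, hcd, hda, hab, hbc⟩
    ext; simp only [Set.mem_insert_iff, Set.mem_singleton_iff]; tauto
  · refine ⟨a, b, c, hbd.symm, hac, ?_, hda, hab, hbc, hcd⟩
    ext; simp only [Set.mem_insert_iff, Set.mem_singleton_iff]; tauto

lemma adj_right_of_sup_adj (h₁ : ∀ u, (G₁.neighborSet u).Subsingleton)
    (h : (G₁ ⊔ G₂).Adj u v) (hw : G₁.Adj u w) (hvw : v ≠ w) : G₂.Adj u v :=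
  h.resolve_left fun hv => hvw (h₁ u hv hw)

lemma adj_left_of_sup_adj (h₂ : ∀ u, (G₂.neighborSet u).Subsingleton)
    (h : (G₁ ⊔ G₂).Adj u v) (hw : G₂.Adj u w) (hvw : v ≠ w) : G₁.Adj u v :=
  h.resolve_right fun hv => hvw (h₂ u hv hw)

lemma IsFourCycleOn.exists_alternating (h₁ : ∀ u, (G₁.neighborSet u).Subsingleton)
    (h₂ : ∀ u, (G₂.neighborSet u).Subsingleton) (hs : IsFourCycleOn (G₁ ⊔ G₂) s) (hv : v ∈ s) :
    ∃ b c d, s = {v, b, c, d} ∧ G₁.Adj v b ∧ G₂.Adj b c ∧ G₁.Adj c d ∧ G₂.Adj d v := by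
  obtain ⟨b, c, d, hvc, hbd, rfl, hvb, hbc, hcd, hdv⟩ := hs.exists_of_mem hv
  rcases hvb with hvb | hvb
  · have hbc := adj_right_of_sup_adj h₁ hbc hvb.symm hvc.symm
    have hcd := adj_left_of_sup_adj h₂ hcd hbc.symm hbd.symm
    exact ⟨b, c, d, rfl, hvb, hbc, hcd, adj_right_of_sup_adj h₁ hdv hcd.symm hvc⟩
  · have hvd := adj_left_of_sup_adj h₂ hdv.symm hvb hbd.symm
    have hdc := adj_right_of_sup_adj h₁ hcd.symm hvd.symm hvc.symm
    have hcb := adj_left_of_sup_adj h₂ hbc.symm hdc.symm hbd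
    refine ⟨d, c, b, ?_, hvd, hdc, hcb, hvb.symm⟩
    ext; simp only [Set.mem_insert_iff, Set.mem_singleton_iff]; tauto

lemma IsFourCycleOn.eq_of_mem (h₁ : ∀ u, (G₁.neighborSet u).Subsingleton)
    (h₂ : ∀ u, (G₂.neighborSet u).Subsingleton) (hs : IsFourCycleOn (G₁ ⊔ G₂) s)
    (ht : IsFourCycleOn (G₁ ⊔ G₂) t) (hvs : v ∈ s) (hvt : v ∈ t) : s = t := by
  obtain ⟨b, c, d, rfl, hvb, hbc, -, hdv⟩ := hs.exists_alternating h₁ h₂ hvs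
  obtain ⟨b', c', d', rfl, hvb', hbc', -, hdv'⟩ := ht.exists_alternating h₁ h₂ hvt
  obtain rfl : b = b' := h₁ v hvb hvb'
  obtain rfl : d = d' := h₂ v hdv.symm hdv'.symm
  obtain rfl : c = c' := h₂ b hbc hbc'
  rfl

end FourCycles

section StarterFactor

variable [AddCommGroup Γ] {S : Set (Sym2 Γ)} {γ a b : Γ} {w : Option Γ}

lemma starterFactor_adj_none : (starterFactor S γ).Adj none w ↔ w = some γ := by
  have hnone : ∀ e : Sym2 Γ, none ∉ Sym2.map (fun x => some (x + γ)) e := by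
    intro e h
    obtain ⟨y, -, hy⟩ := Sym2.mem_map.mp h
    exact Option.some_ne_none _ hy
  simp only [starterFactor, fromEdgeSet_adj, Set.mem_union, Set.mem_singleton_iff,
    Sym2.eq_iff, Set.mem_image]
  constructor
  · rintro ⟨(⟨-, h⟩ | ⟨h, -⟩) | ⟨e, -, he⟩, -⟩
    · exact h
    · exact absurd h.symm (Option.some_ne_none γ)
    · exact absurd (he ▸ Sym2.mem_mk_left none w) (hnone e)
  · rintro rfl
    simp

lemma starterFactor_adj_some :
    (starterFactor S γ).Adj (some a) (some b) ↔ s(a - γ, b - γ) ∈ S ∧ a ≠ b := by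
  have hinj : Function.Injective (Sym2.map fun x => (some (x + γ) : Option Γ)) :=
    Sym2.map.injective fun x y h => add_right_cancel (Option.some.inj h)
  have hmap : s(some a, some b) = Sym2.map (fun x => some (x + γ)) s(a - γ, b - γ) := by
    simp
  simp only [starterFactor, fromEdgeSet_adj, Set.mem_union, Set.mem_singleton_iff, hmap,
    hinj.mem_set_image, ne_eq, Option.some.injEq]
  simp

lemma starterFactor_neighborSet_subsingleton (hS₀ : ∀ y, s(0, y) ∉ S)
    (hS : ∀ z y y', s(z, y) ∈ S → s(z, y') ∈ S → y = y') (γ : Γ) (v : Option Γ) :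
    ((starterFactor S γ).neighborSet v).Subsingleton := by
  rcases v with _ | a
  · intro w hw w' hw'
    rw [mem_neighborSet, starterFactor_adj_none] at hw hw'
    rw [hw, hw']
  have not_adj_some : (starterFactor S γ).Adj (some a) none →
      ∀ b, ¬(starterFactor S γ).Adj (some a) (some b) := by
    intro ha b hab
    obtain rfl := Option.some.inj (starterFactor_adj_none.mp ha.symm)
    exact hS₀ _ (by simpa using (starterFactor_adj_some.mp hab).1)
  rintro (_ | b) hb (_ | b') hb'
  · rfl
  · exact absurd hb' (not_adj_some hb b')
  · exact absurd hb (not_adj_some hb' b)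
  · have h := hS _ _ _ (starterFactor_adj_some.mp hb).1 (starterFactor_adj_some.mp hb').1
    rw [sub_left_inj] at h
    rw [h]

end StarterFactor

section Horton

variable {F : Type*} [Field F] {β γ δ : F}

lemma isSquare_of_eq_mul {x y c : F} (hx : IsSquare x) (hx₀ : x ≠ 0) (hy : IsSquare y)
    (h : y = c * x) : IsSquare c := by
  simpa [h, hx₀] using hy.div hx

lemma isSquare_mul_of_not_isSquare [Fintype F] {x y : F} (hx : ¬IsSquare x) (hy : ¬IsSquare y) :
    IsSquare (x * y) := by
  classical
  have hx₀ : x ≠ 0 := by rintro rfl; exact hx IsSquare.zero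
  have hy₀ : y ≠ 0 := by rintro rfl; exact hy IsSquare.zero
  rw [← quadraticChar_one_iff_isSquare (mul_ne_zero hx₀ hy₀), map_mul,
    quadraticChar_neg_one_iff_not_isSquare.mpr hx, quadraticChar_neg_one_iff_not_isSquare.mpr hy]
  norm_num

lemma mem_hortonStarter_iff {u v : F} :
    s(u, v) ∈ hortonStarter β ↔
      ∃ x, x ≠ 0 ∧ IsSquare x ∧ (u = x ∧ v = x * β ∨ u = x * β ∧ v = x) := by
  simp only [hortonStarter, Set.mem_ofPred_eq, Sym2.eq_iff]

lemma zero_pair_not_mem_hortonStarter (hβ : ¬IsSquare β) (y : F) : s(0, y) ∉ hortonStarter β := by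
  have hβ₀ : β ≠ 0 := by rintro rfl; exact hβ IsSquare.zero
  rintro ⟨x, hx₀, -, h⟩
  rcases Sym2.eq_iff.mp h with ⟨h, -⟩ | ⟨h, -⟩
  · exact hx₀ h.symm
  · exact mul_ne_zero hx₀ hβ₀ h.symm

lemma eq_of_mem_hortonStarter (hβ : ¬IsSquare β) {z y y' : F} (h : s(z, y) ∈ hortonStarter β)
    (h' : s(z, y') ∈ hortonStarter β) : y = y' := by
  have hβ₀ : β ≠ 0 := by rintro rfl; exact hβ IsSquare.zero
  obtain ⟨x, hx₀, hx, ⟨rfl, rfl⟩ | ⟨rfl, rfl⟩⟩ := mem_hortonStarter_iff.mp h <;>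
    obtain ⟨x', hx₀', hx', ⟨hz, rfl⟩ | ⟨hz, rfl⟩⟩ := mem_hortonStarter_iff.mp h'
  · rw [hz]
  · exact absurd (isSquare_of_eq_mul hx' hx₀' hx (by rw [hz, mul_comm])) hβ
  · exact absurd (isSquare_of_eq_mul hx hx₀ hx' (by rw [← hz, mul_comm])) hβ
  · rw [mul_right_cancel₀ hβ₀ hz]

lemma hortonFactor_neighborSet_subsingleton (hβ : ¬IsSquare β) (γ : F) (v : Option F) :
    ((starterFactor (hortonStarter β) γ).neighborSet v).Subsingleton :=
  starterFactor_neighborSet_subsingleton (zero_pair_not_mem_hortonStarter hβ)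
    (fun _ _ _ => eq_of_mem_hortonStarter hβ) γ v

lemma hortonFactor_adj_some (hβ₁ : β ≠ 1) {a b : F} :
    (starterFactor (hortonStarter β) γ).Adj (some a) (some b) ↔
      ∃ x, x ≠ 0 ∧ IsSquare x ∧
        (a = γ + x ∧ b = γ + x * β ∨ a = γ + x * β ∧ b = γ + x) := by
  simp only [starterFactor_adj_some, mem_hortonStarter_iff, sub_eq_iff_eq_add']
  refine ⟨And.left, fun h => ⟨h, ?_⟩⟩
  obtain ⟨x, hx₀, -, h⟩ := h
  have hxβ : x * β ≠ x := fun h => hβ₁ ((mul_eq_left₀ hx₀).mp h)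
  rcases h with ⟨rfl, rfl⟩ | ⟨rfl, rfl⟩
  · simpa using hxβ.symm
  · simpa using hxβ

lemma ne_one_of_sq_sub_add_one (hroot : β ^ 2 - β + 1 = 0) : β ≠ 1 := by
  rintro rfl
  norm_num at hroot

lemma exists_hortonFactor_common_neighbor [Fintype F] (hβ : ¬IsSquare β)
    (hroot : β ^ 2 - β + 1 = 0) (hm1 : ¬IsSquare (-1 : F)) (hne : γ ≠ δ) :
    ∃ z, (starterFactor (hortonStarter β) δ).Adj (some γ) (some z) ∧
      (starterFactor (hortonStarter β) γ).Adj (some z) (some δ) := by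
  have hβ₁ := ne_one_of_sq_sub_add_one hroot
  have ht₀ : γ - δ ≠ 0 := sub_ne_zero.mpr hne
  simp only [hortonFactor_adj_some hβ₁]
  by_cases ht : IsSquare (γ - δ)
  · have hβ1sq : IsSquare (β - 1) := ⟨β, by linear_combination -hroot⟩
    refine ⟨δ + (γ - δ) * β, ⟨γ - δ, ht₀, ht, Or.inl ⟨by ring, rfl⟩⟩,
      ⟨(γ - δ) * (β - 1), mul_ne_zero ht₀ (sub_ne_zero.mpr hβ₁), ht.mul hβ1sq,
        Or.inl ⟨by ring, by linear_combination (δ - γ) * hroot⟩⟩⟩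
  · have h1β₀ : 1 - β ≠ 0 := sub_ne_zero.mpr hβ₁.symm
    have h1β : ¬IsSquare (1 - β) := fun h =>
      hβ (isSquare_of_eq_mul h h1β₀ IsSquare.one (by linear_combination hroot))
    refine ⟨γ - (γ - δ) * β,
      ⟨(γ - δ) * (1 - β), mul_ne_zero ht₀ h1β₀, isSquare_mul_of_not_isSquare ht h1β,
        Or.inr ⟨by linear_combination (γ - δ) * hroot, by ring⟩⟩,
      ⟨-1 * (γ - δ), mul_ne_zero (neg_ne_zero.mpr one_ne_zero) ht₀,
        isSquare_mul_of_not_isSquare hm1 ht, Or.inr ⟨by ring, by ring⟩⟩⟩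

/-- In each of the sixteen orientation patterns of the four edges, the edge equations force
`γ = δ`, `2γ = 2δ`, or a ratio `-1`, `2`, `2(β - 1) = 2β²` or `-2β` between the square
parameters of two of the edges. -/
lemma hortonFactor_not_alternating_four_cycle (hroot : β ^ 2 - β + 1 = 0)
    (hm1 : ¬IsSquare (-1 : F)) (h2 : ¬IsSquare (2 : F)) (hne : γ ≠ δ) {a b c d : F}
    (e₁ : (starterFactor (hortonStarter β) γ).Adj (some a) (some b))
    (e₂ : (starterFactor (hortonStarter β) δ).Adj (some b) (some c))
    (e₃ : (starterFactor (hortonStarter β) γ).Adj (some c) (some d))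
    (e₄ : (starterFactor (hortonStarter β) δ).Adj (some d) (some a)) : False := by
  have h2₀ : (2 : F) ≠ 0 := by intro h; exact h2 (h ▸ IsSquare.zero)
  have hβ1sq : IsSquare (β - 1) := ⟨β, by linear_combination -hroot⟩
  have hβ1₀ : β - 1 ≠ 0 := sub_ne_zero.mpr (ne_one_of_sq_sub_add_one hroot)
  have hmβ : IsSquare (-β) := ⟨β * β, by linear_combination (-β ^ 2 - β) * hroot⟩
  have hmβ₀ : -β ≠ 0 := by
    rw [neg_ne_zero]
    rintro rfl
    norm_num at hroot
  have h2β1 : ¬IsSquare (2 * (β - 1)) := fun h => h2 (isSquare_of_eq_mul hβ1sq hβ1₀ h rfl)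
  have hm2β : ¬IsSquare (-(2 * β)) := fun h => h2 (isSquare_of_eq_mul hmβ hmβ₀ h (by ring))
  rw [hortonFactor_adj_some (ne_one_of_sq_sub_add_one hroot)] at e₁ e₂ e₃ e₄
  obtain ⟨x₁, hx₁, sx₁, ⟨rfl, rfl⟩ | ⟨rfl, rfl⟩⟩ := e₁ <;>
  obtain ⟨y₁, hy₁, sy₁, ⟨E₁, rfl⟩ | ⟨E₁, rfl⟩⟩ := e₂ <;>
  obtain ⟨x₂, hx₂, sx₂, ⟨E₂, rfl⟩ | ⟨E₂, rfl⟩⟩ := e₃ <;>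
  obtain ⟨y₂, hy₂, sy₂, ⟨E₃, E₄⟩ | ⟨E₃, E₄⟩⟩ := e₄
  · exact hm1 (isSquare_of_eq_mul sx₁ hx₁ sy₁ (by
      linear_combination (1 - β) * E₂ - β * E₃ + E₄ + (x₂ + y₁) * hroot))
  · exact h2β1 (isSquare_of_eq_mul sx₁ hx₁ sy₁ (by
      linear_combination (-1 - β) * E₁ - E₂ + (β - 1) * E₃ + E₄ + (x₁ - x₂ + y₂) * hroot))
  · exact h2 (isSquare_of_eq_mul sx₂ hx₂ sx₁ (by
      linear_combination E₁ + (1 - β) * E₂ - E₃ + (1 - β) * E₄ + (-x₂ + y₁ - y₂) * hroot))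
  · exact hne (by linear_combination E₁ + (1 - β) * E₂ + E₃ - β * E₄ + (y₁ - x₂) * hroot)
  · exact hm2β (isSquare_of_eq_mul sx₁ hx₁ sy₂ (by
      linear_combination (1 - β) * E₁ + E₂ + (1 - β) * E₃ + (2 * β - 1) * E₄ +
        (x₁ + x₂ - y₁ + 2 * y₂) * hroot))
  · exact hne (mul_left_cancel₀ h2₀ (by
      linear_combination β * E₁ + (β - 1) * E₂ + β * E₃ + (1 - β) * E₄ +
        (-x₁ - x₂ + y₁ + y₂) * hroot))
  · exact hne (by linear_combination (β - 1) * E₁ - E₂ - β * E₃ + E₄ + (y₁ - x₁) * hroot)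
  · exact h2 (isSquare_of_eq_mul sx₁ hx₁ sx₂ (by
      linear_combination (β - 1) * E₁ - E₂ + (1 - β) * E₃ - E₄ + (-x₁ + y₁ - y₂) * hroot))
  · exact h2 (isSquare_of_eq_mul sx₁ hx₁ sx₂ (by
      linear_combination -E₁ + (β - 1) * E₂ + E₃ + (β - 1) * E₄ + (-x₁ - y₁ + y₂) * hroot))
  · exact hne (by linear_combination -β * E₁ - E₂ + (β - 1) * E₃ + E₄ + (y₂ - x₂) * hroot)
  · exact hne (mul_left_cancel₀ h2₀ (by
      linear_combination (1 - β) * E₁ - β * E₂ + (1 - β) * E₃ + β * E₄ +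
        (-x₁ - x₂ + y₁ + y₂) * hroot))
  · exact h2β1 (isSquare_of_eq_mul sx₁ hx₁ sy₂ (by
      linear_combination E₁ + (1 - β) * E₂ + E₃ + (-1 - β) * E₄ + (x₁ - x₂ + y₁) * hroot))
  · exact hne (by linear_combination E₁ + β * E₂ + E₃ + (β - 1) * E₄ + (y₂ - x₁) * hroot)
  · exact h2 (isSquare_of_eq_mul sx₂ hx₂ sx₁ (by
      linear_combination (1 - β) * E₁ + E₂ + (β - 1) * E₃ + E₄ + (-x₂ - y₁ + y₂) * hroot))
  · exact hm2β (isSquare_of_eq_mul sx₁ hx₁ sy₁ (by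
      linear_combination (2 * β - 1) * E₁ + (β - 1) * E₂ - E₃ + (1 - β) * E₄ +
        (x₁ + x₂ + 2 * y₁ - y₂) * hroot))
  · exact hm1 (isSquare_of_eq_mul sx₁ hx₁ sy₁ (by
      linear_combination E₂ + β * E₃ + (1 - β) * E₄ + (x₁ + y₂) * hroot))

lemma none_mem_of_isFourCycleOn_hortonFactor (hβ : ¬IsSquare β) (hroot : β ^ 2 - β + 1 = 0)
    (hm1 : ¬IsSquare (-1 : F)) (h2 : ¬IsSquare (2 : F)) (hne : γ ≠ δ) {s : Set (Option F)}
    (hs : IsFourCycleOn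
      (starterFactor (hortonStarter β) γ ⊔ starterFactor (hortonStarter β) δ) s) :
    none ∈ s := by
  by_contra hnone
  obtain ⟨v, hv⟩ : s.Nonempty := by
    obtain ⟨a, b, c, d, -, -, -, -, -, -, rfl, -⟩ := hs
    exact ⟨a, by simp⟩
  obtain ⟨b, c, d, rfl, e₁, e₂, e₃, e₄⟩ := hs.exists_alternating
    (hortonFactor_neighborSet_subsingleton hβ γ) (hortonFactor_neighborSet_subsingleton hβ δ) hv
  simp only [Set.mem_insert_iff, Set.mem_singleton_iff, not_or] at hnone
  obtain ⟨hv, hb, hc, hd⟩ := hnone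
  obtain ⟨a, rfl⟩ := Option.ne_none_iff_exists.mp (Ne.symm hv)
  obtain ⟨b, rfl⟩ := Option.ne_none_iff_exists.mp (Ne.symm hb)
  obtain ⟨c, rfl⟩ := Option.ne_none_iff_exists.mp (Ne.symm hc)
  obtain ⟨d, rfl⟩ := Option.ne_none_iff_exists.mp (Ne.symm hd)
  exact hortonFactor_not_alternating_four_cycle hroot hm1 h2 hne e₁ e₂ e₃ e₄

end Horton

theorem statement_7_general {F : Type*} [Field F] [Fintype F] (q : ℕ)
    (hcard : Fintype.card F = q) (hq8 : q % 8 = 3)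
    (β : F) (hβ : ¬ IsSquare β) (hroot : β ^ 2 - β + 1 = 0) :
    ∀ γ δ : F, γ ≠ δ →
      fourCycleCount (starterFactor (hortonStarter β) γ ⊔ starterFactor (hortonStarter β) δ) = 1 := by
  intro γ δ hne
  have hm1 : ¬IsSquare (-1 : F) := fun h => FiniteField.isSquare_neg_one_iff.mp h (by omega)
  have h2 : ¬IsSquare (2 : F) := fun h => (FiniteField.isSquare_two_iff.mp h).1 (by omega)
  have hmatch := hortonFactor_neighborSet_subsingleton hβ
  obtain ⟨z, hγz, hzδ⟩ := exists_hortonFactor_common_neighbor hβ hroot hm1 hne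
  have hcycle : IsFourCycleOn
      (starterFactor (hortonStarter β) γ ⊔ starterFactor (hortonStarter β) δ)
      {none, some γ, some z, some δ} := by
    exact ⟨none, some γ, some z, some δ, by simp, by simp, by simp, hγz.ne, by simpa using hne,
      hzδ.ne, rfl, Or.inl (starterFactor_adj_none.mpr rfl), Or.inr hγz, Or.inl hzδ,
      Or.inr (starterFactor_adj_none.mpr rfl).symm⟩
  rw [fourCycleCount, Set.ncard_eq_one]
  refine ⟨_, Set.eq_singleton_iff_unique_mem.mpr ⟨hcycle, fun s hs => ?_⟩⟩
  exact hs.eq_of_mem (hmatch γ) (hmatch δ) hcycle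
    (none_mem_of_isFourCycleOn_hortonFactor hβ hroot hm1 h2 hne hs) (by simp)

/-- Let `q ≡ 3 (mod 8)` be an odd prime power with `q ≥ 11` and
`q ≡ 1 (mod 3)`. If `β ∈ NQR(q) \ {-1}` satisfies `β² - β + 1 = 0`, then the
one-factorization generated by the starter `S_β` is `(1, C₄)`: the union of any two
distinct one-factors contains exactly one cycle of length four. -/
theorem statement_7 {F : Type*} [Field F] [Fintype F] (q : ℕ)
    (hcard : Fintype.card F = q) (hq8 : q % 8 = 3) (hq11 : 11 ≤ q) (hq3 : q % 3 = 1)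
    (β : F) (hβ : ¬ IsSquare β) (hβ1 : β ≠ -1) (hroot : β ^ 2 - β + 1 = 0) :
    ∀ γ δ : F, γ ≠ δ →
      fourCycleCount (starterFactor (hortonStarter β) γ ⊔ starterFactor (hortonStarter β) δ) = 1 :=
  statement_7_general q hcard hq8 β hβ hroot

end Paper
end

section
/- Let p be an odd prime and m a positive integer such that q = p^m = 2t + 1 > 3 with t odd (equivalently q ≡ 3 (mod 4)), and let r be a primitive root of the finite field F_q (a generator of the multiplicative group F_q*). Then S = {{r^{2i}, r^{2i+1}} : 0 ≤ i ≤ t − 1} is a strong starter for the additive group of F_q. -/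
open SimpleGraph

namespace Paper

variable {V : Type*} {Γ : Type*} {F : Type*}

/-! Write `F*` as `H ⊔ Hβ` and as `H ⊔ -H`. Then the pairs `{x, xβ}`, `x ∈ H`, partition `F*`,
their differences `±x(1 - β)` run once through `F*`, and their sums `x(1 + β)` are distinct and
nonzero as soon as `β ≠ -1`. When `q ≡ 3 (mod 4)` both decompositions hold for `H` the nonzero
squares and `β = r` a primitive root, since `-1` and `r` are nonsquares; and the pairs
`{r^{2i}, r^{2i+1}}` are exactly the pairs `{x, xr}` with `x` a nonzero square. -/

def pairStarter [Mul F] (H : Set F) (β : F) : Set (Sym2 F) :=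
  {e | ∃ x ∈ H, e = s(x, x * β)}

section PairStarter

variable [Field F] {H : Set F} {β : F}

theorem mk_mem_pairStarter {p : F × F} :
    s(p.1, p.2) ∈ pairStarter H β ↔ ∃ x ∈ H, p = (x, x * β) ∨ p = (x * β, x) := by
  simp only [pairStarter, Set.mem_ofPred_eq, Sym2.eq_iff, Prod.ext_iff]

theorem ne_zero_of_forall_mul_mem_iff (hH0 : 0 ∉ H) (hmul : ∀ z ≠ 0, z * β ∈ H ↔ z ∉ H)
    (hneg : ∀ z ≠ 0, -z ∈ H ↔ z ∉ H) : β ≠ 0 := by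
  rintro rfl
  have h1 : (1 : F) ∈ H := by simpa [hH0] using hmul 1 one_ne_zero
  have h2 : (-1 : F) ∈ H := by simpa [hH0] using hmul (-1) (neg_ne_zero.2 one_ne_zero)
  exact (hneg 1 one_ne_zero).1 h2 h1

theorem ne_zero_of_mem_pairStarter (hH0 : 0 ∉ H) (hβ0 : β ≠ 0) {e : Sym2 F}
    (he : e ∈ pairStarter H β) {z : F} (hz : z ∈ e) : z ≠ 0 := by
  obtain ⟨x, hx, rfl⟩ := he
  have hx0 : x ≠ 0 := fun h => hH0 (h ▸ hx)
  rcases Sym2.mem_iff.1 hz with rfl | rfl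
  · exact hx0
  · exact mul_ne_zero hx0 hβ0

theorem existsUnique_mem_pairStarter (hH0 : 0 ∉ H) (hβ0 : β ≠ 0)
    (hmul : ∀ z ≠ 0, z * β ∈ H ↔ z ∉ H) {z : F} (hz : z ≠ 0) :
    ∃! e : Sym2 F, e ∈ pairStarter H β ∧ z ∈ e := by
  have hmem : ∀ x ∈ H, x * β ∉ H := fun x hx h => (hmul x fun h => hH0 (h ▸ hx)).1 h hx
  have huniq : ∀ x ∈ H, ∀ x' ∈ H, z ∈ s(x, x * β) → z ∈ s(x', x' * β) → x = x' := by
    intro x hx x' hx' h h'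
    rcases Sym2.mem_iff.1 h with rfl | rfl <;> rcases Sym2.mem_iff.1 h' with h' | h'
    · exact h'
    · exact absurd (h' ▸ hx) (hmem x' hx')
    · exact absurd (h' ▸ hx') (hmem x hx)
    · exact mul_right_cancel₀ hβ0 h'
  obtain ⟨x, hx, hzx⟩ : ∃ x ∈ H, z ∈ s(x, x * β) := by
    by_cases hzH : z ∈ H
    · exact ⟨z, hzH, Sym2.mem_mk_left _ _⟩
    · have hz' : z * β⁻¹ ≠ 0 := mul_ne_zero hz (inv_ne_zero hβ0)
      refine ⟨z * β⁻¹, not_not.1 fun h => hzH ?_, by simp [hβ0]⟩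
      simpa [hβ0] using (hmul _ hz').2 h
  refine ⟨s(x, x * β), ⟨⟨x, hx, rfl⟩, hzx⟩, ?_⟩
  rintro _ ⟨⟨x', hx', rfl⟩, hzx'⟩
  rw [huniq x' hx' x hx hzx' hzx]

theorem existsUnique_sub_eq_pairStarter (hH0 : 0 ∉ H) (hneg : ∀ z ≠ 0, -z ∈ H ↔ z ∉ H)
    (hβ1 : β ≠ 1) {d : F} (hd : d ≠ 0) :
    ∃! p : F × F, s(p.1, p.2) ∈ pairStarter H β ∧ p.1 - p.2 = d := by
  have hβ1' : 1 - β ≠ 0 := sub_ne_zero.2 hβ1.symm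
  set w := d / (1 - β) with hw
  have hw0 : w ≠ 0 := div_ne_zero hd hβ1'
  have hsub : ∀ x : F, x - x * β = x * (1 - β) := fun x => by ring
  have hsub' : ∀ x : F, x * β - x = -x * (1 - β) := fun x => by ring
  have hdw : ∀ y : F, y * (1 - β) = d ↔ y = w := fun y => by rw [hw, eq_div_iff hβ1']
  have hopp : ∀ y ∈ H, -y ∈ H → False := fun y hy hy' =>
    (hneg y fun h => hH0 (h ▸ hy)).1 hy' hy
  rcases (em (w ∈ H)).imp_right (hneg w hw0).2 with hwH | hwH
  · refine ⟨(w, w * β), ⟨⟨w, hwH, rfl⟩, by rw [hsub, hdw]⟩, ?_⟩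
    rintro p ⟨hp, hd'⟩
    obtain ⟨x, hx, rfl | rfl⟩ := mk_mem_pairStarter.1 hp
    · rw [(hdw x).1 (hsub x ▸ hd')]
    · exact (hopp x hx ((hdw (-x)).1 (hsub' x ▸ hd') ▸ hwH)).elim
  · refine ⟨(-w * β, -w), ⟨⟨-w, hwH, Sym2.eq_swap⟩, by rw [hsub', neg_neg, hdw]⟩, ?_⟩
    rintro p ⟨hp, hd'⟩
    obtain ⟨x, hx, rfl | rfl⟩ := mk_mem_pairStarter.1 hp
    · exact (hopp x hx ((hdw x).1 (hsub x ▸ hd') ▸ hwH)).elim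
    · rw [← (hdw (-x)).1 (hsub' x ▸ hd'), neg_neg]

theorem isStrongStarter_pairStarter (hH0 : 0 ∉ H) (hmul : ∀ z ≠ 0, z * β ∈ H ↔ z ∉ H)
    (hneg : ∀ z ≠ 0, -z ∈ H ↔ z ∉ H) (hβ : β ≠ -1) : IsStrongStarter (pairStarter H β) := by
  have hβ0 := ne_zero_of_forall_mul_mem_iff hH0 hmul hneg
  have hβ1 : β ≠ 1 := by
    rintro rfl
    exact absurd (hmul 1 one_ne_zero) (by simp)
  have hβ' : 1 + β ≠ 0 := fun h => hβ (by linear_combination h)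
  have hsum : ∀ {a b : F}, s(a, b) ∈ pairStarter H β →
      ∃ x ∈ H, s(a, b) = s(x, x * β) ∧ a + b = x * (1 + β) := by
    intro a b hab
    obtain ⟨x, hx, h | h⟩ := mk_mem_pairStarter (p := (a, b)) |>.1 hab <;>
      refine ⟨x, hx, ?_⟩ <;> obtain ⟨rfl, rfl⟩ := Prod.mk.inj h
    · exact ⟨rfl, by ring⟩
    · exact ⟨Sym2.eq_swap, by ring⟩
  refine ⟨⟨fun z hz => existsUnique_mem_pairStarter hH0 hβ0 hmul hz,
    fun e he z hz => ne_zero_of_mem_pairStarter hH0 hβ0 he hz,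
    fun d hd => existsUnique_sub_eq_pairStarter hH0 hneg hβ1 hd⟩, ?_, ?_⟩
  · intro a b hab
    obtain ⟨x, hx, -, hx'⟩ := hsum hab
    rw [hx']
    exact mul_ne_zero (fun h => hH0 (h ▸ hx)) hβ'
  · intro a b u v hab huv h
    obtain ⟨x, -, hab', hx⟩ := hsum hab
    obtain ⟨y, -, huv', hy⟩ := hsum huv
    rw [hab', huv', mul_right_cancel₀ hβ' (hx.symm.trans (h.trans hy))]

end PairStarter

theorem FiniteField.isSquare_mul_iff_of_not_isSquare [Field F] [Fintype F] {a b : F}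
    (ha : a ≠ 0) (hb : ¬IsSquare b) : IsSquare (a * b) ↔ ¬IsSquare a := by
  classical
  have hab : a * b ≠ 0 := mul_ne_zero ha fun h => hb (h ▸ IsSquare.zero)
  rw [← quadraticChar_one_iff_isSquare hab, ← quadraticChar_neg_one_iff_not_isSquare, map_mul,
    quadraticChar_neg_one_iff_not_isSquare.2 hb]
  rcases quadraticChar_dichotomy ha with h | h <;> rw [h] <;> decide

theorem hortonStarter_eq_pairStarter [Field F] (β : F) :
    hortonStarter β = pairStarter (QRset F) β := by
  ext e
  simp only [hortonStarter, pairStarter, QRset, Set.mem_ofPred_eq, and_assoc]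

theorem isStrongStarter_hortonStarter [Field F] [Fintype F] {β : F}
    (hneg : ¬IsSquare (-1 : F)) (hβ : ¬IsSquare β) (hβ1 : β ≠ -1) :
    IsStrongStarter (hortonStarter β) := by
  have hmulSq : ∀ {c : F}, ¬IsSquare c → ∀ z ≠ 0, z * c ∈ QRset F ↔ z ∉ QRset F :=
    fun {c} hc z hz => by
      have hc0 : c ≠ 0 := fun h => hc (h ▸ IsSquare.zero)
      simp [QRset, hz, hc0, FiniteField.isSquare_mul_iff_of_not_isSquare hz hc]
  rw [hortonStarter_eq_pairStarter]
  refine isStrongStarter_pairStarter (fun h => h.1 rfl) (hmulSq hβ) (fun z hz => ?_) hβ1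
  simpa using hmulSq hneg z hz

section PrimitiveRoot

variable [Field F] {r : F}

theorem not_isSquare_of_forall_eq_pow (hr : ∀ x : F, x ≠ 0 → ∃ n : ℕ, x = r ^ n)
    (hneg : ¬IsSquare (-1 : F)) : ¬IsSquare r := by
  rintro ⟨s, rfl⟩
  obtain ⟨n, hn⟩ := hr (-1) (neg_ne_zero.2 one_ne_zero)
  exact hneg ⟨s ^ n, by rw [hn, mul_pow]⟩

theorem ne_neg_one_of_forall_eq_pow [Fintype F] (hr : ∀ x : F, x ≠ 0 → ∃ n : ℕ, x = r ^ n)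
    (hF : 3 < Fintype.card F) : r ≠ -1 := by
  classical
  rintro rfl
  have hsub : (Finset.univ : Finset F) ⊆ {0, 1, -1} := fun x _ => by
    by_cases hx : x = 0
    · simp [hx]
    · obtain ⟨n, rfl⟩ := hr x hx
      rcases neg_one_pow_eq_or F n with h | h <;> simp [h]
  have := (Finset.card_le_card hsub).trans Finset.card_le_three
  rw [Finset.card_univ] at this
  omega

theorem setOf_pow_pairs_eq_hortonStarter (hr : ∀ x : F, x ≠ 0 → ∃ n : ℕ, x = r ^ n)
    (hsq : ¬IsSquare r) {t : ℕ} (ht : 0 < t) (hrt : r ^ (2 * t) = 1) :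
    {e : Sym2 F | ∃ i : ℕ, i < t ∧ e = s(r ^ (2 * i), r ^ (2 * i + 1))} = hortonStarter r := by
  have hr0 : r ≠ 0 := fun h => hsq (h ▸ IsSquare.zero)
  ext e
  constructor
  · rintro ⟨i, -, rfl⟩
    exact ⟨r ^ (2 * i), pow_ne_zero _ hr0, ⟨r ^ i, by ring⟩, by rw [pow_succ]⟩
  · rintro ⟨x, hx0, hxsq, rfl⟩
    obtain ⟨n, rfl⟩ := hr x hx0
    obtain ⟨k, rfl⟩ : Even n := by
      by_contra hodd
      obtain ⟨k, rfl⟩ := Nat.not_even_iff_odd.1 hodd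
      refine hsq ?_
      have hr_eq : r = r ^ (2 * k + 1) / (r ^ k) ^ 2 := by field_simp; ring
      exact hr_eq ▸ hxsq.div (IsSquare.sq _)
    refine ⟨k % t, Nat.mod_lt _ ht, ?_⟩
    rw [← two_mul, pow_succ, pow_eq_pow_mod (2 * k) hrt, Nat.mul_mod_mul_left]

end PrimitiveRoot

theorem statement_16_general {F : Type*} [Field F] [Fintype F] (p m t : ℕ)
    (hcard : Fintype.card F = p ^ m) (ht : p ^ m = 2 * t + 1) (htodd : Odd t)
    (hq3 : 3 < p ^ m)
    (r : F) (hr : ∀ x : F, x ≠ 0 → ∃ n : ℕ, x = r ^ n) :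
    IsStrongStarter {e : Sym2 F | ∃ i : ℕ, i < t ∧ e = s(r ^ (2 * i), r ^ (2 * i + 1))} := by
  have hq : Fintype.card F = 2 * t + 1 := hcard.trans ht
  have hneg : ¬IsSquare (-1 : F) := by
    obtain ⟨k, rfl⟩ := htodd
    rw [FiniteField.isSquare_neg_one_iff, hq]
    omega
  have hsq := not_isSquare_of_forall_eq_pow hr hneg
  have hrt : r ^ (2 * t) = 1 := by
    simpa [hq] using FiniteField.pow_card_sub_one_eq_one r fun h => hsq (h ▸ IsSquare.zero)
  rw [setOf_pow_pairs_eq_hortonStarter hr hsq (by omega) hrt]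
  exact isStrongStarter_hortonStarter hneg hsq (ne_neg_one_of_forall_eq_pow hr (by omega))

/-- Mullin–Nemeth. Let `p` be an odd prime and `m ≥ 1` with
`q = p^m = 2t + 1 > 3`, `t` odd, and let `r` be a primitive root of `F_q`. Then
`S = {{r^{2i}, r^{2i+1}} : 0 ≤ i ≤ t - 1}` is a strong starter for the additive
group of `F_q`. -/
theorem statement_16 {F : Type*} [Field F] [Fintype F] (p m t : ℕ)
    (hp : p.Prime) (hpodd : Odd p) (hm : 0 < m)
    (hcard : Fintype.card F = p ^ m) (ht : p ^ m = 2 * t + 1) (htodd : Odd t)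
    (hq3 : 3 < p ^ m)
    (r : F) (hr : ∀ x : F, x ≠ 0 → ∃ n : ℕ, x = r ^ n) :
    IsStrongStarter {e : Sym2 F | ∃ i : ℕ, i < t ∧ e = s(r ^ (2 * i), r ^ (2 * i + 1))} :=
  statement_16_general p m t hcard ht htodd hq3 r hr

end Paper
end
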